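/- arXiv:2304.03672 — 2 statements merged into one kernel-verified Lean document; each statement's English description precedes it below -/
import Mathlib

section
/- (Theorem 1 of the paper.) Let d be a square-integrable random vector in ℝⁿ on a probability space (Ω, μ), and let C ⊆ ℝⁿ be a measurable set such that E[d] ∈ C and the diameter of C is at most d_C (i.e., ‖x − y‖ ≤ d_C for all x, y ∈ C). Assume there is a constant α ≥ 0 such that ‖d(ω) − E[d]‖² ≤ α for μ-almost every ω with d(ω) ∉ C. Then the sum of the componentwise descriptor variances is bounded above by Σ_{j=1}^{n} Var(d⁽ʲ⁾) ≤ d_C² + α·(1 − μ({d ∈ C})). In particular, maximizing the probability μ({d ∈ C}) that the descriptor belongs to the cell minimizes this upper bound on the trace of the covariance matrix of d. -/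
open MeasureTheory ProbabilityTheory

/-! The sum of the componentwise variances is `E‖d - E[d]‖²`. On `{d ∈ C}` both `d ω` and `E[d]`
lie in `C`, so the integrand is at most `dC²` there, and at most `α` off it. -/

section

variable {Ω : Type*} [MeasurableSpace Ω] {μ : Measure Ω}

lemma integral_le_mul_measureReal_add_mul_measureReal_compl [IsFiniteMeasure μ]
    {f : Ω → ℝ} (hf : Integrable f μ) {s : Set Ω} (hs : MeasurableSet s) {a b : ℝ}
    (h_in : ∀ᵐ ω ∂μ, ω ∈ s → f ω ≤ a) (h_out : ∀ᵐ ω ∂μ, ω ∉ s → f ω ≤ b) :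
    ∫ ω, f ω ∂μ ≤ a * μ.real s + b * μ.real sᶜ := by
  have h_in' : ∫ ω in s, f ω ∂μ ≤ ∫ _ in s, a ∂μ :=
    integral_mono_ae hf.integrableOn (integrable_const a) ((ae_restrict_iff' hs).2 h_in)
  have h_out' : ∫ ω in sᶜ, f ω ∂μ ≤ ∫ _ in sᶜ, b ∂μ :=
    integral_mono_ae hf.integrableOn (integrable_const b) ((ae_restrict_iff' hs.compl).2 h_out)
  rw [← integral_add_compl hs hf]
  simp only [setIntegral_const, smul_eq_mul] at h_in' h_out'
  linarith

lemma sum_variance_eval_eq_integral_norm_sub_integral_sq {ι : Type*} [Fintype ι]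
    [IsFiniteMeasure μ] {X : Ω → EuclideanSpace ℝ ι} (hX : ∀ i, MemLp (fun ω => X ω i) 2 μ) :
    ∑ i, variance (fun ω => X ω i) μ = ∫ ω, ‖X ω - ∫ ω', X ω' ∂μ‖ ^ 2 ∂μ := by
  have h_int i : Integrable (fun ω => X ω i) μ := (hX i).integrable one_le_two
  have h_sq i : Integrable (fun ω => (X ω i - (∫ ω', X ω' ∂μ) i) ^ 2) μ :=
    ((hX i).sub (memLp_const _)).integrable_sq
  simp_rw [EuclideanSpace.real_norm_sq_eq, PiLp.sub_apply, integral_finsetSum _ fun i _ => h_sq i,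
    eval_integral_piLp h_int]
  exact Finset.sum_congr rfl fun i _ => variance_eq_integral (hX i).aestronglyMeasurable.aemeasurable

end

theorem sum_variance_le_of_prob_in_cell_general
    {Ω : Type*} [MeasurableSpace Ω] (μ : Measure Ω) [IsProbabilityMeasure μ]
    (n : ℕ)
    (d : Ω → EuclideanSpace ℝ (Fin n)) (hd : Measurable d)
    (h2 : ∀ j : Fin n, MemLp (fun ω => d ω j) 2 μ)
    (C : Set (EuclideanSpace ℝ (Fin n))) (hC : MeasurableSet C)
    (dC : ℝ)
    (hmean : (∫ ω, d ω ∂μ) ∈ C)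
    (hdiam : ∀ x ∈ C, ∀ y ∈ C, ‖x - y‖ ≤ dC)
    (α : ℝ)
    (hout : ∀ᵐ ω ∂μ, d ω ∉ C → ‖d ω - ∫ ω', d ω' ∂μ‖ ^ 2 ≤ α) :
    ∑ j : Fin n, variance (fun ω => d ω j) μ
      ≤ dC ^ 2 + α * (1 - (μ (d ⁻¹' C)).toReal) := by
  have h_int : Integrable (fun ω => ‖d ω - ∫ ω', d ω' ∂μ‖ ^ 2) μ :=
    ((MemLp.of_eval_piLp h2).sub (memLp_const _)).integrable_norm_pow two_ne_zero
  have h_in : ∀ᵐ ω ∂μ, ω ∈ d ⁻¹' C → ‖d ω - ∫ ω', d ω' ∂μ‖ ^ 2 ≤ dC ^ 2 :=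
    .of_forall fun ω hω => pow_le_pow_left₀ (norm_nonneg _) (hdiam _ hω _ hmean) 2
  calc ∑ j : Fin n, variance (fun ω => d ω j) μ
      = ∫ ω, ‖d ω - ∫ ω', d ω' ∂μ‖ ^ 2 ∂μ :=
        sum_variance_eval_eq_integral_norm_sub_integral_sq h2
    _ ≤ dC ^ 2 * μ.real (d ⁻¹' C) + α * μ.real (d ⁻¹' C)ᶜ :=
      integral_le_mul_measureReal_add_mul_measureReal_compl h_int (hd hC) h_in hout
    _ ≤ dC ^ 2 + α * (1 - μ.real (d ⁻¹' C)) := by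
      rw [probReal_compl_eq_one_sub (hd hC)]
      exact add_le_add_left (mul_le_of_le_one_right (sq_nonneg dC) measureReal_le_one) _

/-- Theorem 1 of the paper: if `C` is a measurable cell containing `E[d]` with
diameter at most `dC`, and `‖d − E[d]‖² ≤ α` almost surely outside the event
`{d ∈ C}`, then the sum of the componentwise descriptor variances is bounded by
`dC² + α·(1 − μ({d ∈ C}))`. -/
theorem sum_variance_le_of_prob_in_cell
    {Ω : Type*} [MeasurableSpace Ω] (μ : Measure Ω) [IsProbabilityMeasure μ]
    (n : ℕ) (hn : 0 < n)
    (d : Ω → EuclideanSpace ℝ (Fin n)) (hd : Measurable d)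
    (h2 : ∀ j : Fin n, MemLp (fun ω => d ω j) 2 μ)
    (C : Set (EuclideanSpace ℝ (Fin n))) (hC : MeasurableSet C)
    (dC : ℝ)
    (hmean : (∫ ω, d ω ∂μ) ∈ C)
    (hdiam : ∀ x ∈ C, ∀ y ∈ C, ‖x - y‖ ≤ dC)
    (α : ℝ) (hα : 0 ≤ α)
    (hout : ∀ᵐ ω ∂μ, d ω ∉ C → ‖d ω - ∫ ω', d ω' ∂μ‖ ^ 2 ≤ α) :
    ∑ j : Fin n, variance (fun ω => d ω j) μ
      ≤ dC ^ 2 + α * (1 - (μ (d ⁻¹' C)).toReal) :=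
  sum_variance_le_of_prob_in_cell_general μ n d hd h2 C hC dC hmean hdiam α hout
end

section
/- (Theorem 2, probability bound.) Let f : Ω → ℝ and d : Ω → ℝⁿ be measurable, let C ⊆ ℝⁿ be measurable with centroid c ∈ ℝⁿ, and suppose f_min ≤ f(ω) ≤ f_max holds μ-almost surely, with f_min < f_max. Define õ(ω) = f(ω) if d(ω) ∈ C and õ(ω) = f_min − ‖d(ω) − c‖ otherwise, and assume õ is integrable. Then the probability that the descriptor belongs to the cell satisfies μ({d ∈ C}) ≥ (E[õ] − f_min)/(f_max − f_min). In particular, maximizing the expectation E[õ] maximizes a lower bound on μ({d ∈ C}). -/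
open MeasureTheory ProbabilityTheory

/-!
On the cell the objective is at most `f_max`; off the cell it is at most `f_min`, because the
penalty `‖d - c‖` is nonnegative. Hence `E[õ] ≤ f_max · P(d ∈ C) + f_min · (1 - P(d ∈ C))`,
which rearranges to the bound.
-/

section

variable {Ω : Type*} [MeasurableSpace Ω] {μ : Measure Ω} {A : Set Ω} {o : Ω → ℝ} {a b : ℝ}

theorem integral_le_of_ae_le_on_of_ae_le_off [IsFiniteMeasure μ] (hA : NullMeasurableSet A μ)
    (ho : Integrable o μ) (hon : ∀ᵐ ω ∂μ, ω ∈ A → o ω ≤ a)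
    (hoff : ∀ᵐ ω ∂μ, ω ∈ Aᶜ → o ω ≤ b) :
    ∫ ω, o ω ∂μ ≤ μ.real A * a + μ.real Aᶜ * b := by
  rw [← integral_add_compl₀ hA ho]
  have hA_le : ∫ ω in A, o ω ∂μ ≤ ∫ _ in A, a ∂μ :=
    setIntegral_mono_on_ae₀ ho.integrableOn (integrable_const a).integrableOn hA hon
  have hAc_le : ∫ ω in Aᶜ, o ω ∂μ ≤ ∫ _ in Aᶜ, b ∂μ :=
    setIntegral_mono_on_ae₀ ho.integrableOn (integrable_const b).integrableOn hA.compl hoff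
  rw [setIntegral_const, smul_eq_mul] at hA_le hAc_le
  linarith

theorem div_le_probReal_of_ae_le_on_of_ae_le_off [IsProbabilityMeasure μ]
    (hA : NullMeasurableSet A μ) (ho : Integrable o μ) (hba : b < a)
    (hon : ∀ᵐ ω ∂μ, ω ∈ A → o ω ≤ a) (hoff : ∀ᵐ ω ∂μ, ω ∈ Aᶜ → o ω ≤ b) :
    (∫ ω, o ω ∂μ - b) / (a - b) ≤ μ.real A := by
  have h := integral_le_of_ae_le_on_of_ae_le_off hA ho hon hoff
  rw [probReal_compl_eq_one_sub₀ hA] at h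
  rw [div_le_iff₀ (sub_pos.mpr hba)]
  linarith

end

theorem prob_in_cell_ge_of_expectation_objective_general
    {Ω : Type*} [MeasurableSpace Ω] (μ : Measure Ω) [IsProbabilityMeasure μ]
    (n : ℕ)
    (d : Ω → EuclideanSpace ℝ (Fin n)) (hd : Measurable d)
    (f : Ω → ℝ)
    (C : Set (EuclideanSpace ℝ (Fin n))) (hC : MeasurableSet C)
    (c : EuclideanSpace ℝ (Fin n)) (fmin fmax : ℝ)
    (hbound : ∀ᵐ ω ∂μ, fmin ≤ f ω ∧ f ω ≤ fmax)
    (hlt : fmin < fmax)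
    (otilde : Ω → ℝ)
    (hot : ∀ ω, (d ω ∈ C → otilde ω = f ω) ∧
      (d ω ∉ C → otilde ω = fmin - ‖d ω - c‖))
    (hoInt : Integrable otilde μ) :
    (μ {ω | d ω ∈ C}).toReal ≥ ((∫ ω, otilde ω ∂μ) - fmin) / (fmax - fmin) := by
  have hon : ∀ᵐ ω ∂μ, ω ∈ {ω | d ω ∈ C} → otilde ω ≤ fmax := by
    filter_upwards [hbound] with ω hf hω
    exact ((hot ω).1 hω).trans_le hf.2
  have hoff : ∀ ω, ω ∈ {ω | d ω ∈ C}ᶜ → otilde ω ≤ fmin := fun ω hω ↦ by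
    rw [(hot ω).2 hω]
    exact sub_le_self _ (norm_nonneg _)
  exact div_le_probReal_of_ae_le_on_of_ae_le_off (hd hC).nullMeasurableSet hoInt hlt hon
    (.of_forall hoff)

/-- Theorem 2 of the paper (probability bound): if `f_min ≤ f ≤ f_max` almost
surely with `f_min < f_max`, then for the stochastic objective
`õ(ω) = f(ω)` if `d(ω) ∈ C` and `õ(ω) = f_min − ‖d(ω) − c‖` otherwise,
the probability that the descriptor belongs to the cell satisfies
`μ({d ∈ C}) ≥ (E[õ] − f_min)/(f_max − f_min)`. -/
theorem prob_in_cell_ge_of_expectation_objective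
    {Ω : Type*} [MeasurableSpace Ω] (μ : Measure Ω) [IsProbabilityMeasure μ]
    (n : ℕ) (hn : 0 < n)
    (d : Ω → EuclideanSpace ℝ (Fin n)) (hd : Measurable d)
    (f : Ω → ℝ) (hf : Measurable f)
    (C : Set (EuclideanSpace ℝ (Fin n))) (hC : MeasurableSet C)
    (c : EuclideanSpace ℝ (Fin n)) (fmin fmax : ℝ)
    (hbound : ∀ᵐ ω ∂μ, fmin ≤ f ω ∧ f ω ≤ fmax)
    (hlt : fmin < fmax)
    (otilde : Ω → ℝ)
    (hot : ∀ ω, (d ω ∈ C → otilde ω = f ω) ∧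
      (d ω ∉ C → otilde ω = fmin - ‖d ω - c‖))
    (hoInt : Integrable otilde μ) :
    (μ {ω | d ω ∈ C}).toReal ≥ ((∫ ω, otilde ω ∂μ) - fmin) / (fmax - fmin) :=
  prob_in_cell_ge_of_expectation_objective_general μ n d hd f C hC c fmin fmax hbound hlt otilde hot
    hoInt
end
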